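/- arXiv:2312.13635 — 4 statements merged into one kernel-verified Lean document; each statement's English description precedes it below -/
import Mathlib

section
/- Let $\vec{P}=(p_1,p_2)$ with $1<p_1,p_2<\infty$, $1/p=1/p_1+1/p_2$ and $1<p<\infty$, and let $\vec{w}=(w_1,w_2)\in A_{\vec{P}}$. Then $\vec{w}^{1}=(v_{\vec{w}}^{\,1-p'},\,w_2)$ belongs to $A_{\vec{P}^1}$ with $\vec{P}^1=(p',p_2)$, and moreover $[\vec{w}^{1}]_{A_{\vec{P}^1}}=[\vec{w}]_{A_{\vec{P}}}^{\,p_1'/p}$, where $p'$ and $p_1'$ are the conjugate exponents of $p$ and $p_1$. -/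
open MeasureTheory Set ENNReal

noncomputable section

/-- Euclidean space `ℝⁿ`. -/
abbrev Rn (n : ℕ) := Fin n → ℝ

/-- `Q` is an axis-parallel (half-open) cube of sidelength `h`. -/
def HasSide {n : ℕ} (Q : Set (Rn n)) (h : ℝ) : Prop :=
  ∃ c : Rn n, Q = {x | ∀ i, c i ≤ x i ∧ x i < c i + h}

/-- `Q` is an axis-parallel cube (with positive sidelength). -/
def IsCube {n : ℕ} (Q : Set (Rn n)) : Prop :=
  ∃ h : ℝ, 0 < h ∧ HasSide Q h

/-- A dyadic cubes system: cubes of sidelengths `2^k`, pairwise nested or disjoint,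
and for each fixed `k` the cubes of sidelength `2^k` cover (hence partition) `ℝⁿ`. -/
def IsDyadicSystem {n : ℕ} (D : Set (Set (Rn n))) : Prop :=
  (∀ Q ∈ D, ∃ k : ℤ, HasSide Q ((2 : ℝ) ^ k)) ∧
  (∀ Q ∈ D, ∀ R ∈ D, Q ∩ R = Q ∨ Q ∩ R = R ∨ Q ∩ R = ∅) ∧
  (∀ k : ℤ, ∀ x : Rn n, ∃ Q ∈ D, HasSide Q ((2 : ℝ) ^ k) ∧ x ∈ Q)

/-- A sparse family: each `Q` carries a measurable subset `E Q ⊆ Q` with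
`|E Q| ≥ |Q|/2`, the sets `E Q` being pairwise disjoint. -/
def IsSparse {n : ℕ} (S : Set (Set (Rn n))) : Prop :=
  ∃ E : Set (Rn n) → Set (Rn n),
    (∀ Q ∈ S, E Q ⊆ Q ∧ MeasurableSet (E Q) ∧ volume Q ≤ 2 * volume (E Q)) ∧
    S.Pairwise fun Q R => Disjoint (E Q) (E R)

/-- A weight: a measurable nonnegative (`ℝ≥0∞`-valued) locally integrable function. -/
def IsWeight {n : ℕ} (w : Rn n → ℝ≥0∞) : Prop :=
  Measurable w ∧ ∀ Q : Set (Rn n), IsCube Q → (∫⁻ x in Q, w x) ≠ ∞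

/-- `w(Q) = ∫_Q w`. -/
def mass {n : ℕ} (w : Rn n → ℝ≥0∞) (Q : Set (Rn n)) : ℝ≥0∞ := ∫⁻ x in Q, w x

/-- `⟨w⟩_Q = w(Q)/|Q|`. -/
def avg {n : ℕ} (w : Rn n → ℝ≥0∞) (Q : Set (Rn n)) : ℝ≥0∞ := mass w Q / volume Q

/-- The conjugate exponent `q' = q/(q-1)`. -/
def conj (q : ℝ) : ℝ := q / (q - 1)

/-- The product weight `v_w = w₁^{p/p₁} w₂^{p/p₂}`. -/
def vweight {n : ℕ} (p p1 p2 : ℝ) (w1 w2 : Rn n → ℝ≥0∞) : Rn n → ℝ≥0∞ :=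
  fun x => w1 x ^ (p / p1) * w2 x ^ (p / p2)

/-- The dual weight `σ = w^{1-q'}`. -/
def dualW {n : ℕ} (q : ℝ) (w : Rn n → ℝ≥0∞) : Rn n → ℝ≥0∞ :=
  fun x => w x ^ (1 - conj q)

/-- The multilinear `A_{\vec P}` constant
`[\vec w]_{A_{\vec P}} = sup_Q ⟨v_w⟩_Q ⟨σ₁⟩_Q^{p/p₁'} ⟨σ₂⟩_Q^{p/p₂'}`. -/
def APconst {n : ℕ} (p p1 p2 : ℝ) (w1 w2 : Rn n → ℝ≥0∞) : ℝ≥0∞ :=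
  ⨆ (Q : Set (Rn n)) (_ : IsCube Q),
    avg (vweight p p1 p2 w1 w2) Q * avg (dualW p1 w1) Q ^ (p / conj p1) *
      avg (dualW p2 w2) Q ^ (p / conj p2)

/-- The (linear) `A_q` constant `[w]_{A_q} = sup_Q ⟨w⟩_Q ⟨w^{1-q'}⟩_Q^{q-1}`. -/
def AqConst {n : ℕ} (q : ℝ) (w : Rn n → ℝ≥0∞) : ℝ≥0∞ :=
  ⨆ (Q : Set (Rn n)) (_ : IsCube Q),
    avg w Q * avg (fun x => w x ^ (1 - conj q)) Q ^ (q - 1)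

/-- The Hardy–Littlewood maximal operator (over axis-parallel cubes). -/
def HLMax {n : ℕ} (w : Rn n → ℝ≥0∞) (x : Rn n) : ℝ≥0∞ :=
  ⨆ (Q : Set (Rn n)) (_ : IsCube Q) (_ : x ∈ Q), avg w Q

/-- The Fujii–Wilson `A_∞` constant `[w]_{A_∞} = sup_Q w(Q)⁻¹ ∫_Q M(wχ_Q)`. -/
def AinfConst {n : ℕ} (w : Rn n → ℝ≥0∞) : ℝ≥0∞ :=
  ⨆ (Q : Set (Rn n)) (_ : IsCube Q), (∫⁻ x in Q, HLMax (Q.indicator w) x) / mass w Q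

/-- `‖g‖_{L^p(v)}` for an `ℝ≥0∞`-valued function. -/
def lpNorm {n : ℕ} (g : Rn n → ℝ≥0∞) (p : ℝ) (v : Rn n → ℝ≥0∞) : ℝ≥0∞ :=
  (∫⁻ x, g x ^ p * v x) ^ (1 / p)

/-- `‖g‖_{L^{p,∞}(v)} = sup_{t>0} t · v({g > t})^{1/p}`. -/
def wkNorm {n : ℕ} (g : Rn n → ℝ≥0∞) (p : ℝ) (v : Rn n → ℝ≥0∞) : ℝ≥0∞ :=
  ⨆ t : ℝ≥0∞, t * mass v {x | t < g x} ^ (1 / p)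

/-- The pointwise `ℝ≥0∞`-valued absolute value of a real function. -/
def eAbs {n : ℕ} (f : Rn n → ℝ) : Rn n → ℝ≥0∞ := fun x => (‖f x‖₊ : ℝ≥0∞)

/-- `f ∈ L^p(v)`. -/
def MemLpW {n : ℕ} (f : Rn n → ℝ) (p : ℝ) (v : Rn n → ℝ≥0∞) : Prop :=
  Measurable f ∧ lpNorm (eAbs f) p v ≠ ∞

/-- The bilinear sparse operator `A_{D,S}(g₁,g₂) = ∑_{Q∈S} ⟨g₁⟩_Q ⟨g₂⟩_Q χ_Q`. -/
def sparseOp {n : ℕ} (S : Set (Set (Rn n))) (g1 g2 : Rn n → ℝ≥0∞) (x : Rn n) : ℝ≥0∞ :=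
  ∑' Q : S, Set.indicator (Q : Set (Rn n)) (fun _ => avg g1 Q * avg g2 Q) x

/-- The weighted average `⟨f⟩_Q^w = (∫_Q |f| w)/w(Q)`. -/
def wAvg {n : ℕ} (f : Rn n → ℝ) (w : Rn n → ℝ≥0∞) (Q : Set (Rn n)) : ℝ≥0∞ :=
  (∫⁻ x in Q, (‖f x‖₊ : ℝ≥0∞) * w x) / mass w Q


/-- The exponent `β = 1/p + max{min{1/p₁', (1/p₁')(p₂'/p)}, min{1/p₂', (1/p₂')(p₁'/p)}}`. -/
def betaExp (p p1 p2 : ℝ) : ℝ :=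
  1 / p + max (min (1 / conj p1) (1 / conj p1 * (conj p2 / p)))
              (min (1 / conj p2) (1 / conj p2 * (conj p1 / p)))

/-- The exponent `γ = max{1, p₁'/p, p₂'/p}`. -/
def gammaExp (p p1 p2 : ℝ) : ℝ := max 1 (max (conj p1 / p) (conj p2 / p))

end

/-!
Put `q = p₁'`. Since `(1 - p')(1 - p) = 1`, the dual weight of `v^{1-p'}` for the exponent `p'`
is `v` itself, and the exponents combine so that the new product weight
`(v^{1-p'})^{q/p'} w₂^{q/p₂}` equals `σ₁ = w₁^{1-p₁'}` wherever `0 < w₂ < ∞` and `w₁ < ∞`.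
Hence on every cube the new `A_{P¹}` quantity is the `p₁'/p`-th power of the old one, and
`x ↦ x^{p₁'/p}` commutes with suprema.
-/

theorem one_div_conj {p : ℝ} (hp : p ≠ 0) : 1 / conj p = 1 - 1 / p := by
  unfold conj
  field_simp

theorem conj_conj {p : ℝ} (hp : p ≠ 1) : conj (conj p) = p := by
  have hp' : p - 1 ≠ 0 := sub_ne_zero.mpr hp
  unfold conj
  field_simp
  ring

theorem one_lt_conj {p : ℝ} (hp : 1 < p) : 1 < conj p := by
  unfold conj
  rw [lt_div_iff₀ (by linarith)]
  linarith

theorem one_sub_conj_mul_one_sub {p : ℝ} (hp : p ≠ 1) : (1 - conj p) * (1 - p) = 1 := by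
  have hp' : p - 1 ≠ 0 := sub_ne_zero.mpr hp
  unfold conj
  field_simp
  ring

theorem conj_eq_of_one_div_eq {p p1 p2 q : ℝ} (hp0 : p ≠ 0) (hp1 : p1 ≠ 0)
    (hp : 1 / p = 1 / p1 + 1 / p2) (hq : 1 / q = 1 / conj p + 1 / p2) : q = conj p1 := by
  have h : 1 / q = 1 / conj p1 := by
    rw [hq, one_div_conj hp0, one_div_conj hp1]
    linarith
  simpa using h

theorem ENNReal.mul_rpow_rpow_mul_rpow {a b : ℝ≥0∞} {s t u w : ℝ} (ha : a ≠ ∞) (hs : 0 ≤ s)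
    (hb0 : b ≠ 0) (hbt : b ≠ ∞) (h : t * u + w = 0) :
    (a ^ s * b ^ t) ^ u * b ^ w = a ^ (s * u) := by
  rw [ENNReal.mul_rpow_of_ne_top (rpow_ne_top_of_nonneg hs ha) (rpow_ne_top_of_ne_zero hb0 hbt),
    ← ENNReal.rpow_mul, ← ENNReal.rpow_mul, mul_assoc, ← ENNReal.rpow_add _ _ hb0 hbt, h,
    ENNReal.rpow_zero, mul_one]

theorem ENNReal.rpow_ne_zero_of_ne_top {a : ℝ≥0∞} {r : ℝ} (ha : a ≠ ∞) (hr : r < 0) :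
    a ^ r ≠ 0 := by
  simp [ENNReal.rpow_eq_zero_iff, ha, hr.not_gt]

theorem ENNReal.iSup₂_rpow {ι : Sort*} {κ : ι → Sort*} (f : ∀ i, κ i → ℝ≥0∞) {y : ℝ}
    (hy : 0 < y) : (⨆ (i) (j), f i j) ^ y = ⨆ (i) (j), f i j ^ y :=
  (ENNReal.orderIsoRpow y hy).map_iSup₂ f

section Measure

variable {α : Type*} [MeasurableSpace α] {μ : Measure α}

theorem ae_ne_zero_of_lintegral_rpow_ne_top {w : α → ℝ≥0∞} (hw : AEMeasurable w μ) {r : ℝ}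
    (hr : r < 0) (h : ∫⁻ x, w x ^ r ∂μ ≠ ∞) : ∀ᵐ x ∂μ, w x ≠ 0 := by
  filter_upwards [ae_lt_top' (hw.pow_const r) h] with x hx hx0
  simp [hx0, ENNReal.zero_rpow_of_neg hr] at hx

theorem lintegral_ne_zero_of_ae_imp {f g : α → ℝ≥0∞} (hg : AEMeasurable g μ)
    (h : ∀ᵐ x ∂μ, f x ≠ 0 → g x ≠ 0) (hf : ∫⁻ x, f x ∂μ ≠ 0) : ∫⁻ x, g x ∂μ ≠ 0 := by
  intro hg0
  have hf0 : f =ᵐ[μ] 0 := by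
    filter_upwards [(lintegral_eq_zero_iff' hg).mp hg0, h] with x hgx hfg
    by_contra hfx
    exact hfg hfx hgx
  exact hf (by simp [lintegral_congr_ae hf0])

end Measure

section Cube

variable {n : ℕ} {Q : Set (Rn n)}

theorem IsCube.volume_pos_ne_top (hQ : IsCube Q) : 0 < volume Q ∧ volume Q ≠ ∞ := by
  obtain ⟨h, hh, c, rfl⟩ := hQ
  have hpi : {x : Rn n | ∀ i, c i ≤ x i ∧ x i < c i + h} = univ.pi fun i => Ico (c i) (c i + h) := by
    ext x
    simp [mem_pi]
  rw [hpi, volume_pi_pi]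
  simp only [Real.volume_Ico, add_sub_cancel_left, Finset.prod_const, Finset.card_univ,
    Fintype.card_fin]
  exact ⟨ENNReal.pow_pos (ENNReal.ofReal_pos.mpr hh) n, ENNReal.pow_ne_top ENNReal.ofReal_ne_top⟩

theorem IsWeight.ae_ne_top {w : Rn n → ℝ≥0∞} (hw : IsWeight w) (hQ : IsCube Q) :
    ∀ᵐ x ∂volume.restrict Q, w x ≠ ∞ := by
  filter_upwards [ae_lt_top hw.1 (hw.2 Q hQ)] with x hx using hx.ne

theorem avg_ne_zero_iff {w : Rn n → ℝ≥0∞} (hQ : IsCube Q) : avg w Q ≠ 0 ↔ mass w Q ≠ 0 := by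
  simp [avg, ENNReal.div_eq_zero_iff, hQ.volume_pos_ne_top.2]

theorem mass_ne_top_of_avg_ne_top {w : Rn n → ℝ≥0∞} (hQ : IsCube Q) (h : avg w Q ≠ ∞) :
    mass w Q ≠ ∞ := by
  intro hm
  simp [avg, hm, ENNReal.div_eq_top, hQ.volume_pos_ne_top.2] at h

end Cube
noncomputable def APcube {n : ℕ} (p p1 p2 : ℝ) (w1 w2 : Rn n → ℝ≥0∞) (Q : Set (Rn n)) : ℝ≥0∞ :=
  avg (vweight p p1 p2 w1 w2) Q * avg (dualW p1 w1) Q ^ (p / conj p1) *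
    avg (dualW p2 w2) Q ^ (p / conj p2)

theorem APconst_eq_iSup_APcube {n : ℕ} (p p1 p2 : ℝ) (w1 w2 : Rn n → ℝ≥0∞) :
    APconst p p1 p2 w1 w2 = ⨆ (Q : Set (Rn n)) (_ : IsCube Q), APcube p p1 p2 w1 w2 Q :=
  rfl

section Transfer

variable {n : ℕ} {p p1 p2 : ℝ} {w1 w2 : Rn n → ℝ≥0∞} {Q : Set (Rn n)}

theorem dualW_conj_rpow_one_sub_conj (hp : p ≠ 1) (w : Rn n → ℝ≥0∞) :
    dualW (conj p) (fun x => w x ^ (1 - conj p)) = w := by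
  funext x
  rw [dualW, ← ENNReal.rpow_mul, conj_conj hp, one_sub_conj_mul_one_sub hp, ENNReal.rpow_one]

theorem vweight_transfer_eq_dualW (hp0 : 1 < p) (hp1 : 1 < p1) {x : Rn n} (h1 : w1 x ≠ ∞)
    (h20 : w2 x ≠ 0) (h2 : w2 x ≠ ∞) :
    vweight (conj p1) (conj p) p2 (fun x => vweight p p1 p2 w1 w2 x ^ (1 - conj p)) w2 x =
      dualW p1 w1 x := by
  have hp : p - 1 ≠ 0 := by linarith
  have hp1' : p1 - 1 ≠ 0 := by linarith
  have hu : (1 - conj p) * (conj p1 / conj p) = -(conj p1 / p) := by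
    unfold conj
    field_simp
    ring
  simp only [vweight, dualW]
  rw [← ENNReal.rpow_mul, hu,
    ENNReal.mul_rpow_rpow_mul_rpow h1 (by positivity) h20 h2 (by field_simp; ring)]
  congr 1
  unfold conj
  field_simp
  ring

theorem ae_vweight_transfer_eq_dualW (hp0 : 1 < p) (hp1 : 1 < p1) (hp2 : 1 < p2)
    (hw1 : IsWeight w1) (hw2 : IsWeight w2) (hQ : IsCube Q) (h : avg (dualW p2 w2) Q ≠ ∞) :
    vweight (conj p1) (conj p) p2 (fun x => vweight p p1 p2 w1 w2 x ^ (1 - conj p)) w2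
      =ᵐ[volume.restrict Q] dualW p1 w1 := by
  have h20 : ∀ᵐ x ∂volume.restrict Q, w2 x ≠ 0 :=
    ae_ne_zero_of_lintegral_rpow_ne_top hw2.1.aemeasurable (by linarith [one_lt_conj hp2])
      (mass_ne_top_of_avg_ne_top hQ h)
  filter_upwards [hw1.ae_ne_top hQ, hw2.ae_ne_top hQ, h20] with x h1 h2 h20
  exact vweight_transfer_eq_dualW hp0 hp1 h1 h20 h2

theorem mass_vweight_transfer_ne_zero (hp0 : 1 < p) (hp1 : 1 < p1) (hp2 : 1 < p2)
    (hw1 : IsWeight w1) (hw2 : IsWeight w2) (hQ : IsCube Q) (h : mass (vweight p p1 p2 w1 w2) Q ≠ 0) :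
    mass (vweight (conj p1) (conj p) p2
      (fun x => vweight p p1 p2 w1 w2 x ^ (1 - conj p)) w2) Q ≠ 0 := by
  have hvm : Measurable (vweight p p1 p2 w1 w2) := (hw1.1.pow_const _).mul (hw2.1.pow_const _)
  refine lintegral_ne_zero_of_ae_imp
    (((hvm.pow_const _).pow_const _).mul (hw2.1.pow_const _)).aemeasurable ?_ h
  filter_upwards [hw1.ae_ne_top hQ, hw2.ae_ne_top hQ] with x h1 h2 hv
  have h20 : w2 x ≠ 0 := by
    rintro h0
    exact hv (by simp [vweight, h0, ENNReal.zero_rpow_of_pos (by positivity : 0 < p / p2)])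
  rw [vweight_transfer_eq_dualW hp0 hp1 h1 h20 h2]
  exact ENNReal.rpow_ne_zero_of_ne_top h1 (by linarith [one_lt_conj hp1])

theorem mass_dualW_ne_zero (hp1 : 1 < p1) (hw1 : IsWeight w1) (hQ : IsCube Q) :
    mass (dualW p1 w1) Q ≠ 0 := by
  refine lintegral_ne_zero_of_ae_imp (f := 1) (hw1.1.pow_const _).aemeasurable ?_ ?_
  · filter_upwards [hw1.ae_ne_top hQ] with x h1 _
    exact ENNReal.rpow_ne_zero_of_ne_top h1 (by linarith [one_lt_conj hp1])
  · simpa using hQ.volume_pos_ne_top.1.ne'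

theorem avg_vweight_transfer_mul_eq (hp0 : 1 < p) (hp1 : 1 < p1) (hp2 : 1 < p2)
    (hw1 : IsWeight w1) (hw2 : IsWeight w2) (hQ : IsCube Q) {α β : ℝ} (hα : 0 < α) (hβ : 0 < β) :
    avg (vweight (conj p1) (conj p) p2
        (fun x => vweight p p1 p2 w1 w2 x ^ (1 - conj p)) w2) Q *
        avg (vweight p p1 p2 w1 w2) Q ^ α * avg (dualW p2 w2) Q ^ β =
      avg (vweight p p1 p2 w1 w2) Q ^ α * avg (dualW p1 w1) Q * avg (dualW p2 w2) Q ^ β := by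
  by_cases hσ2 : avg (dualW p2 w2) Q = ∞
  · -- The new weight and `σ₁` may now differ where `w₂` vanishes, but both have nonzero
    -- averages once `⟨v⟩_Q ≠ 0`, so the two sides are `0` or `∞` together.
    rw [hσ2, ENNReal.top_rpow_of_pos hβ]
    by_cases hv : avg (vweight p p1 p2 w1 w2) Q = 0
    · simp [hv, ENNReal.zero_rpow_of_pos hα]
    have hvα : avg (vweight p p1 p2 w1 w2) Q ^ α ≠ 0 := by
      simp [ENNReal.rpow_eq_zero_iff, hv, hα, hα.not_gt]
    have hv' := (avg_ne_zero_iff hQ).2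
      (mass_vweight_transfer_ne_zero hp0 hp1 hp2 hw1 hw2 hQ ((avg_ne_zero_iff hQ).1 hv))
    have hσ1 := (avg_ne_zero_iff hQ).2 (mass_dualW_ne_zero hp1 hw1 hQ)
    rw [ENNReal.mul_top (mul_ne_zero hv' hvα), ENNReal.mul_top (mul_ne_zero hvα hσ1)]
  · have h : avg (vweight (conj p1) (conj p) p2
        (fun x => vweight p p1 p2 w1 w2 x ^ (1 - conj p)) w2) Q = avg (dualW p1 w1) Q := by
      rw [avg, avg, mass, mass,
        lintegral_congr_ae (ae_vweight_transfer_eq_dualW hp0 hp1 hp2 hw1 hw2 hQ hσ2)]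
    rw [h]
    ring

theorem APcube_transfer_eq (hp0 : 1 < p) (hp1 : 1 < p1) (hp2 : 1 < p2)
    (hw1 : IsWeight w1) (hw2 : IsWeight w2) (hQ : IsCube Q) :
    APcube (conj p1) (conj p) p2 (fun x => vweight p p1 p2 w1 w2 x ^ (1 - conj p)) w2 Q =
      APcube p p1 p2 w1 w2 Q ^ (conj p1 / p) := by
  have hc1 : conj p1 ≠ 0 := by linarith [one_lt_conj hp1]
  have hc2 : 0 < conj p2 := by linarith [one_lt_conj hp2]
  have hα : 0 < conj p1 / p := div_pos (by linarith [one_lt_conj hp1]) (by linarith)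
  have hβ : 0 < conj p1 / conj p2 := div_pos (by linarith [one_lt_conj hp1]) hc2
  rw [APcube, APcube, dualW_conj_rpow_one_sub_conj hp0.ne', conj_conj hp0.ne',
    avg_vweight_transfer_mul_eq hp0 hp1 hp2 hw1 hw2 hQ hα hβ,
    ENNReal.mul_rpow_of_nonneg _ _ hα.le, ENNReal.mul_rpow_of_nonneg _ _ hα.le,
    ← ENNReal.rpow_mul, ← ENNReal.rpow_mul,
    show p / conj p1 * (conj p1 / p) = 1 by field_simp,
    show p / conj p2 * (conj p1 / p) = conj p1 / conj p2 by field_simp, ENNReal.rpow_one]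

end Transfer

/-- If `\vec w = (w₁, w₂) ∈ A_{(p₁,p₂)}` then `\vec w¹ = (v_{\vec w}^{1-p'}, w₂) ∈ A_{(p',p₂)}`
with `[\vec w¹]_{A_{\vec P¹}} = [\vec w]_{A_{\vec P}}^{p₁'/p}`. -/
theorem statement3 {n : ℕ} (p p1 p2 q : ℝ)
    (hp1 : 1 < p1) (hp2 : 1 < p2) (hp : 1 / p = 1 / p1 + 1 / p2) (hp0 : 1 < p)
    (hq : 1 / q = 1 / conj p + 1 / p2)
    (w1 w2 : Rn n → ℝ≥0∞) (hw1 : IsWeight w1) (hw2 : IsWeight w2)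
    (hAP : APconst p p1 p2 w1 w2 ≠ ∞) :
    APconst q (conj p) p2 (fun x => vweight p p1 p2 w1 w2 x ^ (1 - conj p)) w2 ≠ ∞ ∧
    APconst q (conj p) p2 (fun x => vweight p p1 p2 w1 w2 x ^ (1 - conj p)) w2 =
      APconst p p1 p2 w1 w2 ^ (conj p1 / p) := by
  obtain rfl : q = conj p1 := conj_eq_of_one_div_eq (by linarith) (by linarith) hp hq
  have hα : 0 < conj p1 / p := div_pos (by linarith [one_lt_conj hp1]) (by linarith)
  have h : APconst (conj p1) (conj p) p2 (fun x => vweight p p1 p2 w1 w2 x ^ (1 - conj p)) w2 =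
      APconst p p1 p2 w1 w2 ^ (conj p1 / p) := by
    rw [APconst_eq_iSup_APcube, APconst_eq_iSup_APcube, ENNReal.iSup₂_rpow _ hα]
    exact iSup_congr fun Q => iSup_congr fun hQ => APcube_transfer_eq hp0 hp1 hp2 hw1 hw2 hQ
  exact ⟨h ▸ ENNReal.rpow_ne_top_of_nonneg hα.le hAP, h⟩
end

section
/- Let $\vec{P}=(p_1,p_2)$ with $1<p_1,p_2<\infty$ and $1/p=1/p_1+1/p_2$, and let $\vec{w}=(w_1,w_2)\in A_{\vec{P}}$. Then the product weight $v_{\vec{w}}=w_1^{p/p_1}w_2^{p/p_2}$ satisfies $[v_{\vec{w}}]_{A_{2p}}\le[\vec{w}]_{A_{\vec{P}}}$. -/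
open MeasureTheory Set ENNReal

/-! The power `v^{1-(2p)'} = v^{-1/(2p-1)}` of the product weight factors pointwise as
`σ₁^{θ₁} σ₂^{θ₂}` with `θᵢ = (p/pᵢ')/(2p-1)`, and `θ₁ + θ₂ = 1` because `1/p = 1/p₁ + 1/p₂`.
Hölder's inequality for the normalized measure on a cube then gives
`⟨v^{1-(2p)'}⟩_Q^{2p-1} ≤ ⟨σ₁⟩_Q^{p/p₁'} ⟨σ₂⟩_Q^{p/p₂'}`, and multiplying by `⟨v⟩_Q` compares
the two constants cube by cube. -/

section Exponents

variable {p p1 p2 : ℝ}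

lemma one_sub_conj {q : ℝ} (hq : q ≠ 1) : 1 - conj q = -(q - 1)⁻¹ := by
  have : q - 1 ≠ 0 := sub_ne_zero.mpr hq
  rw [conj]
  field_simp
  ring

lemma div_conj_eq_sub {q : ℝ} (hq : 1 < q) : p / conj q = p - p / q := by
  have : q - 1 ≠ 0 := by linarith
  rw [conj]
  field_simp

lemma div_mul_one_sub_conj {q r : ℝ} (hq : 1 < q) (hr : r ≠ 1) :
    p / q * (1 - conj r) = (1 - conj q) * (p / conj q / (r - 1)) := by
  have : q - 1 ≠ 0 := by linarith
  have : r - 1 ≠ 0 := sub_ne_zero.mpr hr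
  rw [one_sub_conj hr, one_sub_conj hq.ne', div_conj_eq_sub hq]
  field_simp

lemma pos_of_one_div_eq_add (hp1 : 0 < p1) (hp2 : 0 < p2) (hp : 1 / p = 1 / p1 + 1 / p2) :
    0 < p :=
  one_div_pos.mp (hp ▸ by positivity)

lemma one_lt_two_mul_of_one_div_eq_add (hp1 : 1 < p1) (hp2 : 1 < p2)
    (hp : 1 / p = 1 / p1 + 1 / p2) : 1 < 2 * p := by
  have hp0 := pos_of_one_div_eq_add (by linarith) (by linarith) hp
  have : 1 / p < 2 := by
    rw [hp]
    linarith [(div_lt_one (by linarith : (0 : ℝ) < p1)).mpr hp1,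
      (div_lt_one (by linarith : (0 : ℝ) < p2)).mpr hp2]
  linarith [(div_lt_iff₀ hp0).mp this]

lemma div_conj_add_div_conj (hp1 : 1 < p1) (hp2 : 1 < p2) (hp : 1 / p = 1 / p1 + 1 / p2) :
    p / conj p1 + p / conj p2 = 2 * p - 1 := by
  have hp0 := pos_of_one_div_eq_add (by linarith) (by linarith) hp
  have : p * (1 / p1 + 1 / p2) = 1 := by rw [← hp, mul_one_div_cancel hp0.ne']
  rw [div_conj_eq_sub hp1, div_conj_eq_sub hp2]
  linear_combination -this

end Exponents

section Averages

variable {n : ℕ}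

lemma avg_eq_lintegral (w : Rn n → ℝ≥0∞) (Q : Set (Rn n)) :
    avg w Q = ∫⁻ x, w x ∂((volume Q)⁻¹ • volume.restrict Q) := by
  rw [avg, mass, lintegral_smul_measure, div_eq_mul_inv, mul_comm, smul_eq_mul]

lemma avg_congr_ae {f g : Rn n → ℝ≥0∞} {Q : Set (Rn n)} (h : f =ᵐ[volume.restrict Q] g) :
    avg f Q = avg g Q := by
  rw [avg, avg, mass, mass, lintegral_congr_ae h]

lemma avg_rpow_mul_rpow_le {f g : Rn n → ℝ≥0∞} (hf : Measurable f) (hg : Measurable g)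
    {a b : ℝ} (ha : 0 ≤ a) (hb : 0 ≤ b) (hab : a + b = 1) (Q : Set (Rn n)) :
    avg (fun x => f x ^ a * g x ^ b) Q ≤ avg f Q ^ a * avg g Q ^ b := by
  simp only [avg_eq_lintegral]
  exact ENNReal.lintegral_mul_norm_pow_le hf.aemeasurable hg.aemeasurable ha hb hab

end Averages

lemma ENNReal.mul_rpow_rpow_rpow_of_ne_top {s t : ℝ≥0∞} (hs : s ≠ ∞) (ht : t ≠ ∞)
    {α β : ℝ} (hα : 0 ≤ α) (hβ : 0 ≤ β) (γ : ℝ) :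
    (s ^ α * t ^ β) ^ γ = s ^ (α * γ) * t ^ (β * γ) := by
  rw [ENNReal.mul_rpow_of_ne_top (rpow_ne_top_of_nonneg hα hs) (rpow_ne_top_of_nonneg hβ ht),
    ENNReal.rpow_mul, ENNReal.rpow_mul]

lemma avg_vweight_dual_rpow_le {n : ℕ} {p p1 p2 : ℝ} (hp1 : 1 < p1) (hp2 : 1 < p2)
    (hp : 1 / p = 1 / p1 + 1 / p2) {w1 w2 : Rn n → ℝ≥0∞} (hw1 : IsWeight w1)
    (hw2 : IsWeight w2) {Q : Set (Rn n)} (hQ : IsCube Q) :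
    avg (fun x => vweight p p1 p2 w1 w2 x ^ (1 - conj (2 * p))) Q ^ (2 * p - 1)
      ≤ avg (dualW p1 w1) Q ^ (p / conj p1) * avg (dualW p2 w2) Q ^ (p / conj p2) := by
  have hp0 : 0 < p := pos_of_one_div_eq_add (by linarith) (by linarith) hp
  have h2p : 0 < 2 * p - 1 := by linarith [one_lt_two_mul_of_one_div_eq_add hp1 hp2 hp]
  have hc1 : 0 < conj p1 := div_pos (by linarith) (by linarith)
  have hc2 : 0 < conj p2 := div_pos (by linarith) (by linarith)
  set θ1 := p / conj p1 / (2 * p - 1)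
  set θ2 := p / conj p2 / (2 * p - 1)
  have hθ : θ1 + θ2 = 1 := by
    rw [← add_div, div_conj_add_div_conj hp1 hp2 hp, div_self h2p.ne']
  have hfactor : (fun x => vweight p p1 p2 w1 w2 x ^ (1 - conj (2 * p)))
      =ᵐ[volume.restrict Q] fun x => dualW p1 w1 x ^ θ1 * dualW p2 w2 x ^ θ2 := by
    -- `(s * t) ^ γ = s ^ γ * t ^ γ` fails in `ℝ≥0∞` for `γ < 0`, `s = 0`, `t = ∞`;
    -- local integrability makes the weights finite a.e.
    filter_upwards [ae_lt_top hw1.1 (hw1.2 Q hQ), ae_lt_top hw2.1 (hw2.2 Q hQ)] with x h1 h2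
    rw [vweight, dualW, dualW, ENNReal.mul_rpow_rpow_rpow_of_ne_top h1.ne h2.ne
      (by positivity) (by positivity), ← ENNReal.rpow_mul, ← ENNReal.rpow_mul,
      div_mul_one_sub_conj hp1 (by linarith), div_mul_one_sub_conj hp2 (by linarith)]
  calc avg (fun x => vweight p p1 p2 w1 w2 x ^ (1 - conj (2 * p))) Q ^ (2 * p - 1)
      ≤ (avg (dualW p1 w1) Q ^ θ1 * avg (dualW p2 w2) Q ^ θ2) ^ (2 * p - 1) := by
        rw [avg_congr_ae hfactor]
        gcongr
        exact avg_rpow_mul_rpow_le (hw1.1.pow_const _) (hw2.1.pow_const _)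
          (by positivity) (by positivity) hθ Q
    _ = avg (dualW p1 w1) Q ^ (p / conj p1) * avg (dualW p2 w2) Q ^ (p / conj p2) := by
        rw [ENNReal.mul_rpow_of_nonneg _ _ h2p.le, ← ENNReal.rpow_mul, ← ENNReal.rpow_mul,
          div_mul_cancel₀ _ h2p.ne', div_mul_cancel₀ _ h2p.ne']

theorem statement8_general {n : ℕ} (p p1 p2 : ℝ)
    (hp1 : 1 < p1) (hp2 : 1 < p2) (hp : 1 / p = 1 / p1 + 1 / p2)
    (w1 w2 : Rn n → ℝ≥0∞) (hw1 : IsWeight w1) (hw2 : IsWeight w2) :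
    AqConst (2 * p) (vweight p p1 p2 w1 w2) ≤ APconst p p1 p2 w1 w2 := by
  refine iSup₂_le fun Q hQ => ?_
  calc avg (vweight p p1 p2 w1 w2) Q
        * avg (fun x => vweight p p1 p2 w1 w2 x ^ (1 - conj (2 * p))) Q ^ (2 * p - 1)
      ≤ avg (vweight p p1 p2 w1 w2) Q
        * (avg (dualW p1 w1) Q ^ (p / conj p1) * avg (dualW p2 w2) Q ^ (p / conj p2)) := by
        gcongr
        exact avg_vweight_dual_rpow_le hp1 hp2 hp hw1 hw2 hQ
    _ ≤ APconst p p1 p2 w1 w2 := by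
        rw [← mul_assoc]
        exact le_iSup₂_of_le Q hQ le_rfl

/-- `[v_{\vec w}]_{A_{2p}} ≤ [\vec w]_{A_{\vec P}}`. -/
theorem statement8 {n : ℕ} (p p1 p2 : ℝ)
    (hp1 : 1 < p1) (hp2 : 1 < p2) (hp : 1 / p = 1 / p1 + 1 / p2)
    (w1 w2 : Rn n → ℝ≥0∞) (hw1 : IsWeight w1) (hw2 : IsWeight w2)
    (hAP : APconst p p1 p2 w1 w2 ≠ ∞) :
    AqConst (2 * p) (vweight p p1 p2 w1 w2) ≤ APconst p p1 p2 w1 w2 :=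
  statement8_general p p1 p2 hp1 hp2 hp w1 w2 hw1 hw2
end

section
/- Let $1<p_1,p_2<\infty$ with $1/p=1/p_1+1/p_2$, and suppose $p\ge\frac{3+\sqrt{5}}{2}$. Then $\beta<1$, where $\beta=\frac{1}{p}+\max\{\min\{\frac{1}{p_1'},\frac{1}{p_1'}\frac{p_2'}{p}\},\ \min\{\frac{1}{p_2'},\frac{1}{p_2'}\frac{p_1'}{p}\}\}$ and $p_i'=p_i/(p_i-1)$. -/
open MeasureTheory Set ENNReal

/-- If `p ≥ (3 + √5)/2` then `β < 1`. -/
theorem statement13 (p p1 p2 : ℝ)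
    (hp1 : 1 < p1) (hp2 : 1 < p2) (hp : 1 / p = 1 / p1 + 1 / p2)
    (hP : (3 + Real.sqrt 5) / 2 ≤ p) :
    betaExp p p1 p2 < 1 := by
  have h5 : Real.sqrt 5 ^ 2 = 5 := Real.sq_sqrt (by norm_num)
  have h5' : (2:ℝ) ≤ Real.sqrt 5 := by nlinarith [Real.sqrt_nonneg 5]
  have hp0 : 0 < p := by nlinarith
  have hp10 : 0 < p1 := by linarith
  have hp20 : 0 < p2 := by linarith
  have hp11 : p1 - 1 ≠ 0 := ne_of_gt (by linarith)
  have hp21 : p2 - 1 ≠ 0 := ne_of_gt (by linarith)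
  have ha : 0 < 1/p1 := by positivity
  have hb : 0 < 1/p2 := by positivity
  have ha1 : 1/p1 < 1 := by rw [div_lt_one hp10]; linarith
  have hb1 : 1/p2 < 1 := by rw [div_lt_one hp20]; linarith
  have hpinv : 1/p * p = 1 := by field_simp
  have hs : 1/p1 + 1/p2 ≤ (3 - Real.sqrt 5)/2 := by
    rw [← hp]
    nlinarith [mul_pos (show (0:ℝ) < 1/p by positivity) hp0]
  have key : (1/p1 + 1/p2)^2 - 3*(1/p1 + 1/p2) + 1 ≥ 0 := by
    nlinarith [mul_nonneg (sub_nonneg.2 hs)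
      (show (0:ℝ) ≤ (3 + Real.sqrt 5)/2 - (1/p1 + 1/p2) by nlinarith)]
  have e1 : 1 / conj p1 = 1 - 1/p1 := by unfold conj; rw [one_div_div]; field_simp
  have e2 : 1 / conj p2 = 1 - 1/p2 := by unfold conj; rw [one_div_div]; field_simp
  have e3 : conj p2 / p = (1/p1 + 1/p2) / (1 - 1/p2) := by
    unfold conj
    rw [div_div, ← hp]
    rw [div_eq_div_iff (by positivity) (show (0:ℝ) < 1 - 1/p2 by linarith).ne']
    field_simp
  have e4 : conj p1 / p = (1/p1 + 1/p2) / (1 - 1/p1) := by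
    unfold conj
    rw [div_div, ← hp]
    rw [div_eq_div_iff (by positivity) (show (0:ℝ) < 1 - 1/p1 by linarith).ne']
    field_simp
  unfold betaExp
  rw [e1, e2, e3, e4, hp]
  set a := 1/p1 with hadef
  set b := 1/p2 with hbdef
  have goal1 : (1-a) * ((a+b)/(1-b)) < 1 - (a+b) := by
    rw [mul_div_assoc', div_lt_iff₀ (by linarith)]
    nlinarith [key]
  have goal2 : (1-b) * ((a+b)/(1-a)) < 1 - (a+b) := by
    rw [mul_div_assoc', div_lt_iff₀ (by linarith)]
    nlinarith [key]
  have h1 : min (1-a) ((1-a) * ((a+b)/(1-b))) < 1 - (a+b) :=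
    lt_of_le_of_lt (min_le_right _ _) goal1
  have h2 : min (1-b) ((1-b) * ((a+b)/(1-a))) < 1 - (a+b) :=
    lt_of_le_of_lt (min_le_right _ _) goal2
  have := max_lt h1 h2
  linarith
end

section
/- Let $\vec{P}=(p_1,p_2)$ with $1<p_1,p_2<\infty$, $1/p=1/p_1+1/p_2$ and $1<p<\infty$, let $\vec{w}=(w_1,w_2)\in A_{\vec{P}}$, let $\mathscr{D}$ be a dyadic cubes system in $\mathbb{R}^n$ and $\mathcal{S}\subset\mathscr{D}$ a sparse family. Suppose $\widetilde{Q}\in\mathscr{D}$ and $\operatorname{supp} f_2\subset\widetilde{Q}$. Then there is a constant $C$ depending only on $n$ and $\vec{P}$ such that $\Big\|\chi_{\widetilde{Q}}\sum_{Q\in\mathcal{S},\ \widetilde{Q}\subset Q}\langle\sigma_1\chi_{\widetilde{Q}}\rangle_Q\,\langle|f_2|\sigma_2\rangle_Q\,\chi_Q\Big\|_{L^p(v_{\vec{w}})}\ \le\ C\,[\vec{w}]_{A_{\vec{P}}}^{1/p}\,\|f_2\|_{L^{p_2}(\sigma_2)}\,\sigma_1(\widetilde{Q})^{1/p_1}$.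 -/
open MeasureTheory Set ENNReal

/-!
On `Qt` every point lies in the same cubes `Q ⊇ Qt` of `S`, so the function is a constant `c`
times `χ_Qt` and its norm is `c v(Qt)^{1/p}`. Each term of `c` is at most
`σ₁(Qt) (∫_Qt |f₂| σ₂) |Q|⁻²`, and the cubes of a dyadic system containing `Qt` are nested with
distinct volumes `|Qt| 2^{nj}`, so `∑ |Q|⁻² ≤ 2 |Qt|⁻²`. Hölder gives
`∫_Qt |f₂| σ₂ ≤ ‖f₂‖_{L^{p₂}(σ₂)} σ₂(Qt)^{1/p₂'}`, and since `1/p + 1/p₁' + 1/p₂' = 2` the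
`A_P` condition on `Qt` reads `v(Qt)^{1/p} σ₁(Qt)^{1/p₁'} σ₂(Qt)^{1/p₂'} ≤ [w]^{1/p} |Qt|²`.
Altogether the bound holds with `C = 2`.
-/

lemma Real.holderConjugate_conj {q : ℝ} (hq : 1 < q) : q.HolderConjugate (conj q) :=
  Real.HolderConjugate.conjExponent hq

lemma ENNReal.rpow_one_div_mul_rpow_one_div_of_holderConjugate {p q : ℝ}
    (hpq : p.HolderConjugate q) (x : ℝ≥0∞) : x ^ (1 / p) * x ^ (1 / q) = x := by
  rw [← ENNReal.rpow_add_of_nonneg _ _ hpq.one_div_nonneg hpq.symm.one_div_nonneg,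
    hpq.one_div_add_one_div, div_one, ENNReal.rpow_one]

lemma ENNReal.tsum_inv_mul_inv_le_of_injective {ι : Type*} {V b : ℝ≥0∞} (hb : 2 ≤ b)
    (hb_top : b ≠ ∞) {a : ι → ℝ≥0∞} {ψ : ι → ℕ} (hψ : Function.Injective ψ)
    (ha : ∀ i, a i = V * b ^ ψ i) :
    ∑' i, (a i)⁻¹ * (a i)⁻¹ ≤ 2 * (V⁻¹ * V⁻¹) := by
  have hb0 : b ≠ 0 := (two_pos.trans_le hb).ne'
  have hr : b⁻¹ * b⁻¹ ≤ 2⁻¹ :=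
    calc b⁻¹ * b⁻¹ ≤ 2⁻¹ * 1 :=
          mul_le_mul' (ENNReal.inv_le_inv.2 hb) (ENNReal.inv_le_one.2 (one_le_two.trans hb))
      _ = 2⁻¹ := mul_one _
  calc ∑' i, (a i)⁻¹ * (a i)⁻¹ = ∑' i, V⁻¹ * V⁻¹ * (b⁻¹ * b⁻¹) ^ ψ i := by
        refine tsum_congr fun i => ?_
        rw [ha, ENNReal.mul_inv (Or.inr (pow_ne_top hb_top)) (Or.inr (pow_ne_zero _ hb0)),
          mul_pow, ENNReal.inv_pow]
        ring
    _ = V⁻¹ * V⁻¹ * ∑' i, (b⁻¹ * b⁻¹) ^ ψ i := ENNReal.tsum_mul_left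
    _ ≤ V⁻¹ * V⁻¹ * ∑' m : ℕ, (b⁻¹ * b⁻¹) ^ m := by
        gcongr; exact tsum_comp_le_tsum_of_injective hψ _
    _ ≤ V⁻¹ * V⁻¹ * ∑' m : ℕ, 2⁻¹ ^ m := by gcongr
    _ = 2 * (V⁻¹ * V⁻¹) := by
        rw [ENNReal.tsum_geometric, ENNReal.one_sub_inv_two, inv_inv, mul_comm]

def box {n : ℕ} (c : Rn n) (h : ℝ) : Set (Rn n) :=
  {x | ∀ i, c i ≤ x i ∧ x i < c i + h}

lemma box_eq_pi {n : ℕ} (c : Rn n) (h : ℝ) : box c h = univ.pi fun i => Ico (c i) (c i + h) := by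
  ext x; simp [box, Set.mem_pi]

lemma mem_box_self {n : ℕ} (c : Rn n) {h : ℝ} (hh : 0 < h) : c ∈ box c h :=
  fun _ => ⟨le_rfl, by linarith⟩

lemma volume_box {n : ℕ} (c : Rn n) (h : ℝ) : volume (box c h) = ENNReal.ofReal h ^ n := by
  simp [box_eq_pi, volume_pi_pi, Real.volume_Ico]

lemma box_eq_univ (c : Rn 0) (h : ℝ) : box c h = univ :=
  eq_univ_of_forall fun _ i => i.elim0

lemma le_and_add_le_add_of_box_subset_box {n : ℕ} {c c' : Rn n} {h h' : ℝ} (hh : 0 < h)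
    (hsub : box c h ⊆ box c' h') (i : Fin n) : c' i ≤ c i ∧ c i + h ≤ c' i + h' := by
  have hc := hsub (mem_box_self c hh) i
  refine ⟨hc.1, not_lt.1 fun hlt => ?_⟩
  -- the point of `box c h` whose `i`-th coordinate is the right end of `box c' h'`
  have hx : Function.update c i (c' i + h') ∈ box c h := fun j => by
    rcases eq_or_ne j i with rfl | hj
    · simp only [Function.update_self]; constructor <;> linarith [hc.2]
    · simp only [Function.update_of_ne hj]; exact ⟨le_rfl, by linarith⟩
  simpa using (hsub hx i).2

lemma eq_of_box_subset_box {n : ℕ} {c c' : Rn n} {h : ℝ} (hh : 0 < h)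
    (hsub : box c h ⊆ box c' h) : box c h = box c' h := by
  congr 1
  funext i
  have := le_and_add_le_add_of_box_subset_box hh hsub i
  linarith [this.1, this.2]

lemma side_le_of_box_subset_box {n : ℕ} (hn : 0 < n) {c c' : Rn n} {h h' : ℝ} (hh : 0 < h)
    (hsub : box c h ⊆ box c' h') : h ≤ h' := by
  have := le_and_add_le_add_of_box_subset_box hh hsub ⟨0, hn⟩
  linarith [this.1, this.2]

lemma HasSide.measurableSet {n : ℕ} {Q : Set (Rn n)} {h : ℝ} (hQ : HasSide Q h) :
    MeasurableSet Q := by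
  obtain ⟨c, rfl⟩ := hQ
  change MeasurableSet (box c h)
  rw [box_eq_pi]
  exact MeasurableSet.univ_pi fun _ => measurableSet_Ico

lemma HasSide.volume_eq {n : ℕ} {Q : Set (Rn n)} {h : ℝ} (hQ : HasSide Q h) :
    volume Q = ENNReal.ofReal h ^ n := by
  obtain ⟨c, rfl⟩ := hQ
  exact volume_box c h

namespace IsDyadicSystem

variable {n : ℕ} {D : Set (Set (Rn n))}

lemma subset_or_subset (hD : IsDyadicSystem D) {Q R : Set (Rn n)} (hQ : Q ∈ D) (hR : R ∈ D)
    {x : Rn n} (hxQ : x ∈ Q) (hxR : x ∈ R) : Q ⊆ R ∨ R ⊆ Q := by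
  rcases hD.2.1 Q hQ R hR with h | h | h
  · exact Or.inl (h ▸ inter_subset_right)
  · exact Or.inr (h ▸ inter_subset_left)
  · exact absurd (h ▸ mem_inter hxQ hxR) (notMem_empty x)

lemma eq_of_hasSide_of_mem (hD : IsDyadicSystem D) {Q R : Set (Rn n)} (hQ : Q ∈ D)
    (hR : R ∈ D) {h : ℝ} (hh : 0 < h) (hQh : HasSide Q h) (hRh : HasSide R h) {x : Rn n}
    (hxQ : x ∈ Q) (hxR : x ∈ R) : Q = R := by
  obtain ⟨c, rfl⟩ := hQh
  obtain ⟨c', rfl⟩ := hRh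
  rcases hD.subset_or_subset hQ hR hxQ hxR with hsub | hsub
  · exact eq_of_box_subset_box hh hsub
  · exact (eq_of_box_subset_box hh hsub).symm

lemma exists_injective_volume_eq (hD : IsDyadicSystem D) {S : Set (Set (Rn n))} (hSD : S ⊆ D)
    {Qt : Set (Rn n)} (hQt : Qt ∈ D) :
    ∃ b : ℝ≥0∞, 2 ≤ b ∧ b ≠ ∞ ∧ ∃ ψ : {R // R ∈ S ∧ Qt ⊆ R} → ℕ, Function.Injective ψ ∧
      ∀ R : {R // R ∈ S ∧ Qt ⊆ R}, volume (R : Set (Rn n)) = volume Qt * b ^ ψ R := by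
  obtain ⟨k₀, hQtk₀⟩ := hD.1 Qt hQt
  rcases Nat.eq_zero_or_pos n with rfl | hn
  · have huniv : ∀ R ∈ D, R = univ := fun R hR => by
      obtain ⟨k, c, rfl⟩ := hD.1 R hR
      exact box_eq_univ c _
    refine ⟨2, le_rfl, ofNat_ne_top, fun _ => 0, fun R R' _ => ?_, fun R => ?_⟩
    · exact Subtype.ext ((huniv R (hSD R.2.1)).trans (huniv R' (hSD R'.2.1)).symm)
    · rw [huniv R (hSD R.2.1), pow_zero, mul_one, huniv Qt hQt]
  choose k hk using fun R : {R // R ∈ S ∧ Qt ⊆ R} => hD.1 R (hSD R.2.1)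
  have hk₀ : ∀ R, k₀ ≤ k R := fun R => by
    obtain ⟨c₀, hc₀⟩ := hQtk₀
    obtain ⟨c, hc⟩ := hk R
    have hsub : box c₀ ((2 : ℝ) ^ k₀) ⊆ box c ((2 : ℝ) ^ k R) :=
      hc₀.symm.subset.trans (R.2.2.trans hc.subset)
    exact (zpow_le_zpow_iff_right₀ (one_lt_two : (1 : ℝ) < 2)).1
      (side_le_of_box_subset_box hn (zpow_pos two_pos _) hsub)
  have hkψ : ∀ R, k R = k₀ + ((k R - k₀).toNat : ℕ) := fun R => by
    rw [Int.toNat_of_nonneg (sub_nonneg.2 (hk₀ R))]; ring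
  obtain ⟨c₀, hc₀⟩ := hQtk₀
  have hc₀Qt : c₀ ∈ Qt := hc₀ ▸ mem_box_self c₀ (zpow_pos two_pos k₀)
  refine ⟨2 ^ n, ?_, pow_ne_top ofNat_ne_top, fun R => (k R - k₀).toNat, fun R R' hRR' => ?_,
    fun R => ?_⟩
  · calc (2 : ℝ≥0∞) = 2 ^ 1 := (pow_one 2).symm
      _ ≤ 2 ^ n := pow_le_pow_right₀ one_le_two hn
  · have hkk : k R = k R' := by rw [hkψ R, hkψ R', show (k R - k₀).toNat = _ from hRR']
    refine Subtype.ext (hD.eq_of_hasSide_of_mem (hSD R.2.1) (hSD R'.2.1) (zpow_pos two_pos _)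
      (hk R) (hkk ▸ hk R') (R.2.2 hc₀Qt) (R'.2.2 hc₀Qt))
  · rw [(hk R).volume_eq, HasSide.volume_eq ⟨c₀, hc₀⟩, hkψ R, zpow_add₀ two_ne_zero,
      zpow_natCast, ENNReal.ofReal_mul (zpow_pos two_pos k₀).le, mul_pow,
      ENNReal.ofReal_pow zero_le_two, ofReal_ofNat, ← pow_mul, ← pow_mul, mul_comm n]

lemma tsum_inv_volume_mul_inv_volume_le (hD : IsDyadicSystem D) {S : Set (Set (Rn n))}
    (hSD : S ⊆ D) {Qt : Set (Rn n)} (hQt : Qt ∈ D) :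
    ∑' R : {R // R ∈ S ∧ Qt ⊆ R}, (volume (R : Set (Rn n)))⁻¹ * (volume (R : Set (Rn n)))⁻¹ ≤
      2 * ((volume Qt)⁻¹ * (volume Qt)⁻¹) := by
  obtain ⟨b, hb, hb_top, ψ, hψ, hvol⟩ := hD.exists_injective_volume_eq hSD hQt
  exact ENNReal.tsum_inv_mul_inv_le_of_injective hb hb_top hψ hvol

end IsDyadicSystem

lemma IsCube.volume_ne_zero {n : ℕ} {Q : Set (Rn n)} (hQ : IsCube Q) : volume Q ≠ 0 := by
  obtain ⟨h, hh, hQh⟩ := hQ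
  rw [hQh.volume_eq]
  exact pow_ne_zero _ (ENNReal.ofReal_pos.2 hh).ne'

lemma IsCube.volume_ne_top {n : ℕ} {Q : Set (Rn n)} (hQ : IsCube Q) : volume Q ≠ ∞ := by
  obtain ⟨h, -, hQh⟩ := hQ
  rw [hQh.volume_eq]
  exact pow_ne_top ofReal_ne_top

lemma indicator_tsum_indicator_eq_indicator_tsum {n : ℕ} {ι : Type*} {A : Set (Rn n)}
    {Q : ι → Set (Rn n)} (hAQ : ∀ i, A ⊆ Q i) (a : ι → ℝ≥0∞) :
    (A.indicator fun x => ∑' i, (Q i).indicator (fun _ => a i) x) =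
      A.indicator fun _ => ∑' i, a i :=
  indicator_congr fun _ hx => tsum_congr fun i => indicator_of_mem (hAQ i hx) _

lemma lpNorm_indicator_const {n : ℕ} {A : Set (Rn n)} (hA : MeasurableSet A)
    {v : Rn n → ℝ≥0∞} (hv : Measurable v) {p : ℝ} (hp : 0 < p) (c : ℝ≥0∞) :
    lpNorm (A.indicator fun _ => c) p v = c * mass v A ^ (1 / p) := by
  have hpow : (fun x => A.indicator (fun _ => c) x ^ p * v x) =
      A.indicator fun x => c ^ p * v x := by
    funext x
    by_cases hx : x ∈ A
    · simp [indicator_of_mem hx]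
    · simp [indicator_of_notMem hx, ENNReal.zero_rpow_of_pos hp]
  rw [_root_.lpNorm, hpow, lintegral_indicator hA, lintegral_const_mul _ hv,
    ENNReal.mul_rpow_of_nonneg _ _ (one_div_pos.2 hp).le, ← ENNReal.rpow_mul,
    mul_one_div_cancel hp.ne', ENNReal.rpow_one, mass]

lemma mass_indicator_le {n : ℕ} {A : Set (Rn n)} (hA : MeasurableSet A) (g : Rn n → ℝ≥0∞)
    (Q : Set (Rn n)) : mass (A.indicator g) Q ≤ mass g A :=
  (setLIntegral_le_lintegral _ _).trans_eq (lintegral_indicator hA _)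

lemma mass_mul_le_lpNorm_mul_mass {n : ℕ} {q : ℝ} (hq : 1 < q) {f σ : Rn n → ℝ≥0∞}
    (hf : Measurable f) (hσ : Measurable σ) (A : Set (Rn n)) :
    mass (fun x => f x * σ x) A ≤ lpNorm f q σ * mass σ A ^ (1 / conj q) := by
  have hqq := Real.holderConjugate_conj hq
  have hsplit : ∀ x, f x * σ x = (f x * σ x ^ (1 / q)) * σ x ^ (1 / conj q) := fun x => by
    rw [mul_assoc, ENNReal.rpow_one_div_mul_rpow_one_div_of_holderConjugate hqq]
  have hfq : ∀ x, (f x * σ x ^ (1 / q)) ^ q = f x ^ q * σ x := fun x => by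
    rw [ENNReal.mul_rpow_of_nonneg _ _ hqq.nonneg, ← ENNReal.rpow_mul,
      one_div_mul_cancel hqq.ne_zero, ENNReal.rpow_one]
  have hσq : ∀ x, (σ x ^ (1 / conj q)) ^ conj q = σ x := fun x => by
    rw [← ENNReal.rpow_mul, one_div_mul_cancel hqq.symm.ne_zero, ENNReal.rpow_one]
  calc mass (fun x => f x * σ x) A
      = ∫⁻ x in A, ((fun x => f x * σ x ^ (1 / q)) * fun x => σ x ^ (1 / conj q)) x :=
        lintegral_congr fun x => hsplit x
    _ ≤ (∫⁻ x in A, (f x * σ x ^ (1 / q)) ^ q) ^ (1 / q) *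
          (∫⁻ x in A, (σ x ^ (1 / conj q)) ^ conj q) ^ (1 / conj q) :=
        ENNReal.lintegral_mul_le_Lp_mul_Lq _ hqq
          (hf.mul (hσ.pow_const _)).aemeasurable (hσ.pow_const _).aemeasurable
    _ ≤ lpNorm f q σ * mass σ A ^ (1 / conj q) := by
        simp only [hfq, hσq, _root_.lpNorm, mass]
        gcongr
        exact Measure.restrict_le_self

lemma mass_rpow_mul_le_APconst {n : ℕ} {p p1 p2 : ℝ} (hp : 0 < p) (hq1 : 0 ≤ conj p1)
    (hq2 : 0 ≤ conj p2) {w1 w2 : Rn n → ℝ≥0∞} {Q : Set (Rn n)} (hQ : IsCube Q) :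
    mass (vweight p p1 p2 w1 w2) Q ^ (1 / p) *
        (mass (dualW p1 w1) Q ^ (1 / conj p1) * mass (dualW p2 w2) Q ^ (1 / conj p2)) ≤
      APconst p p1 p2 w1 w2 ^ (1 / p) * volume Q ^ (1 / p + 1 / conj p1 + 1 / conj p2) := by
  have hmass : ∀ g : Rn n → ℝ≥0∞, mass g Q = avg g Q * volume Q := fun g =>
    (ENNReal.div_mul_cancel hQ.volume_ne_zero hQ.volume_ne_top).symm
  have hAP : avg (vweight p p1 p2 w1 w2) Q * avg (dualW p1 w1) Q ^ (p / conj p1) *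
      avg (dualW p2 w2) Q ^ (p / conj p2) ≤ APconst p p1 p2 w1 w2 :=
    le_iSup₂ (f := fun (Q : Set (Rn n)) (_ : IsCube Q) => avg (vweight p p1 p2 w1 w2) Q *
      avg (dualW p1 w1) Q ^ (p / conj p1) * avg (dualW p2 w2) Q ^ (p / conj p2)) Q hQ
  have hexp : ∀ q : ℝ, p / q * (1 / p) = 1 / q := fun q => by field_simp
  have h0 : (0 : ℝ) ≤ 1 / p := (one_div_pos.2 hp).le
  rw [hmass, hmass, hmass, ENNReal.rpow_add _ _ hQ.volume_ne_zero hQ.volume_ne_top,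
    ENNReal.rpow_add _ _ hQ.volume_ne_zero hQ.volume_ne_top, ENNReal.mul_rpow_of_nonneg _ _ h0,
    ENNReal.mul_rpow_of_nonneg _ _ (one_div_nonneg.2 hq1),
    ENNReal.mul_rpow_of_nonneg _ _ (one_div_nonneg.2 hq2)]
  calc _ = (avg (vweight p p1 p2 w1 w2) Q * avg (dualW p1 w1) Q ^ (p / conj p1) *
        avg (dualW p2 w2) Q ^ (p / conj p2)) ^ (1 / p) *
        (volume Q ^ (1 / p) * volume Q ^ (1 / conj p1) * volume Q ^ (1 / conj p2)) := by
        rw [ENNReal.mul_rpow_of_nonneg _ _ h0, ENNReal.mul_rpow_of_nonneg _ _ h0,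
          ← ENNReal.rpow_mul, ← ENNReal.rpow_mul, hexp, hexp]
        ring
    _ ≤ _ := by gcongr

lemma IsDyadicSystem.tsum_avg_indicator_mul_avg_indicator_le {n : ℕ} {D S : Set (Set (Rn n))}
    (hD : IsDyadicSystem D) (hSD : S ⊆ D) {Qt : Set (Rn n)} (hQt : Qt ∈ D)
    (hQtm : MeasurableSet Qt) (g1 g2 : Rn n → ℝ≥0∞) :
    ∑' R : {R // R ∈ S ∧ Qt ⊆ R},
        avg (Qt.indicator g1) (R : Set (Rn n)) * avg (Qt.indicator g2) (R : Set (Rn n)) ≤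
      2 * (mass g1 Qt * mass g2 Qt * ((volume Qt)⁻¹ * (volume Qt)⁻¹)) :=
  calc _ ≤ ∑' R : {R // R ∈ S ∧ Qt ⊆ R}, mass g1 Qt * mass g2 Qt *
        ((volume (R : Set (Rn n)))⁻¹ * (volume (R : Set (Rn n)))⁻¹) := by
        refine ENNReal.tsum_le_tsum fun R => ?_
        calc _ = mass (Qt.indicator g1) R * mass (Qt.indicator g2) R *
              ((volume (R : Set (Rn n)))⁻¹ * (volume (R : Set (Rn n)))⁻¹) := by
              simp only [avg, div_eq_mul_inv]; ring
          _ ≤ _ := by gcongr <;> exact mass_indicator_le hQtm _ _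
    _ = mass g1 Qt * mass g2 Qt * ∑' R : {R // R ∈ S ∧ Qt ⊆ R},
          (volume (R : Set (Rn n)))⁻¹ * (volume (R : Set (Rn n)))⁻¹ := ENNReal.tsum_mul_left
    _ ≤ mass g1 Qt * mass g2 Qt * (2 * ((volume Qt)⁻¹ * (volume Qt)⁻¹)) := by
        gcongr; exact hD.tsum_inv_volume_mul_inv_volume_le hSD hQt
    _ = _ := by ring

lemma mass_mul_mass_mul_mass_vweight_le {n : ℕ} {p p1 p2 : ℝ} (hp1 : 1 < p1) (hp2 : 1 < p2)
    (hp : 1 / p = 1 / p1 + 1 / p2) {w1 w2 f : Rn n → ℝ≥0∞} (hw2 : Measurable w2)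
    (hf : Measurable f) {Q : Set (Rn n)} (hQ : IsCube Q) :
    mass (dualW p1 w1) Q * mass (fun y => f y * dualW p2 w2 y) Q *
        ((volume Q)⁻¹ * (volume Q)⁻¹) * mass (vweight p p1 p2 w1 w2) Q ^ (1 / p) ≤
      APconst p p1 p2 w1 w2 ^ (1 / p) * lpNorm f p2 (dualW p2 w2) *
        mass (dualW p1 w1) Q ^ (1 / p1) := by
  have hq1 := Real.holderConjugate_conj hp1
  have hq2 := Real.holderConjugate_conj hp2
  have hp0 : 0 < p := one_div_pos.1 (hp ▸ add_pos hq1.one_div_pos hq2.one_div_pos)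
  have hexp : 1 / p + 1 / conj p1 + 1 / conj p2 = (2 : ℕ) := by
    have := hq1.one_div_add_one_div
    have := hq2.one_div_add_one_div
    push_cast; linarith
  set V := volume Q
  calc _ ≤ (mass (dualW p1 w1) Q ^ (1 / p1) * mass (dualW p1 w1) Q ^ (1 / conj p1)) *
          (lpNorm f p2 (dualW p2 w2) * mass (dualW p2 w2) Q ^ (1 / conj p2)) *
          (V⁻¹ * V⁻¹) * mass (vweight p p1 p2 w1 w2) Q ^ (1 / p) := by
        rw [ENNReal.rpow_one_div_mul_rpow_one_div_of_holderConjugate hq1]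
        gcongr
        exact mass_mul_le_lpNorm_mul_mass hp2 hf (hw2.pow_const _) Q
    _ = lpNorm f p2 (dualW p2 w2) * mass (dualW p1 w1) Q ^ (1 / p1) *
          (mass (vweight p p1 p2 w1 w2) Q ^ (1 / p) * (mass (dualW p1 w1) Q ^ (1 / conj p1) *
            mass (dualW p2 w2) Q ^ (1 / conj p2))) * (V⁻¹ * V⁻¹) := by ring
    _ ≤ lpNorm f p2 (dualW p2 w2) * mass (dualW p1 w1) Q ^ (1 / p1) *
          (APconst p p1 p2 w1 w2 ^ (1 / p) * V ^ ((2 : ℕ) : ℝ)) * (V⁻¹ * V⁻¹) := by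
        rw [← hexp]
        gcongr _ * ?_ * _
        exact mass_rpow_mul_le_APconst hp0 hq1.symm.nonneg hq2.symm.nonneg hQ
    _ = APconst p p1 p2 w1 w2 ^ (1 / p) * lpNorm f p2 (dualW p2 w2) *
          mass (dualW p1 w1) Q ^ (1 / p1) * (V * V * (V⁻¹ * V⁻¹)) := by
        rw [ENNReal.rpow_natCast, sq]; ring
    _ = _ := by
        rw [mul_mul_mul_comm V V, ENNReal.mul_inv_cancel hQ.volume_ne_zero hQ.volume_ne_top,
          one_mul, mul_one]

theorem statement15_general {n : ℕ} (p p1 p2 : ℝ)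
    (hp1 : 1 < p1) (hp2 : 1 < p2) (hp : 1 / p = 1 / p1 + 1 / p2) :
    ∃ C : ℝ≥0∞, C ≠ ∞ ∧
      ∀ w1 w2 : Rn n → ℝ≥0∞, IsWeight w1 → IsWeight w2 →
        APconst p p1 p2 w1 w2 ≠ ∞ →
        ∀ D S : Set (Set (Rn n)), IsDyadicSystem D → S ⊆ D → IsSparse S →
          ∀ Qt ∈ D, ∀ f2 : Rn n → ℝ, Measurable f2 → Function.support f2 ⊆ Qt →
            lpNorm
                (Qt.indicator fun x =>
                  ∑' Q : {R : Set (Rn n) // R ∈ S ∧ Qt ⊆ R},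
                    Set.indicator (Q : Set (Rn n))
                      (fun _ =>
                        avg (Qt.indicator (dualW p1 w1)) Q *
                          avg (fun y => eAbs f2 y * dualW p2 w2 y) Q) x) p
                (vweight p p1 p2 w1 w2) ≤
              C * APconst p p1 p2 w1 w2 ^ (1 / p) *
                lpNorm (eAbs f2) p2 (dualW p2 w2) *
                mass (dualW p1 w1) Qt ^ (1 / p1) := by
  have hp0 : 0 < p := one_div_pos.1 (hp ▸ add_pos (one_div_pos.2 (by linarith))
    (one_div_pos.2 (by linarith)))
  refine ⟨2, ofNat_ne_top, fun w1 w2 hw1 hw2 _ D S hD hSD _ Qt hQt f2 hf2 hf2Qt => ?_⟩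
  obtain ⟨k, hk⟩ := hD.1 Qt hQt
  have hf2σ2 : Qt.indicator (fun y => eAbs f2 y * dualW p2 w2 y) =
      fun y => eAbs f2 y * dualW p2 w2 y :=
    indicator_eq_self.2 ((Function.support_mul_subset_left _ _).trans fun x hx =>
      hf2Qt fun h => hx (by simp [eAbs, h]))
  rw [indicator_tsum_indicator_eq_indicator_tsum (fun R => R.2.2),
    lpNorm_indicator_const hk.measurableSet
      (show Measurable (vweight p p1 p2 w1 w2) from (hw1.1.pow_const _).mul (hw2.1.pow_const _))
      hp0,
    ← hf2σ2]
  calc _ ≤ 2 * (mass (dualW p1 w1) Qt * mass (fun y => eAbs f2 y * dualW p2 w2 y) Qt *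
          ((volume Qt)⁻¹ * (volume Qt)⁻¹)) * mass (vweight p p1 p2 w1 w2) Qt ^ (1 / p) := by
        gcongr
        exact hD.tsum_avg_indicator_mul_avg_indicator_le hSD hQt hk.measurableSet _ _
    _ ≤ 2 * (APconst p p1 p2 w1 w2 ^ (1 / p) * lpNorm (eAbs f2) p2 (dualW p2 w2) *
          mass (dualW p1 w1) Qt ^ (1 / p1)) := by
        rw [mul_assoc]
        gcongr 2 * ?_
        exact mass_mul_mass_mul_mass_vweight_le hp1 hp2 hp hw2.1 hf2.nnnorm.coe_nnreal_ennreal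
          ⟨_, zpow_pos two_pos k, hk⟩
    _ = _ := by ring

/-- Bound for the part of the sparse operator coming from cubes containing `Q̃`. -/
theorem statement15 {n : ℕ} (p p1 p2 : ℝ)
    (hp1 : 1 < p1) (hp2 : 1 < p2) (hp : 1 / p = 1 / p1 + 1 / p2) (hp0 : 1 < p) :
    ∃ C : ℝ≥0∞, C ≠ ∞ ∧
      ∀ w1 w2 : Rn n → ℝ≥0∞, IsWeight w1 → IsWeight w2 →
        APconst p p1 p2 w1 w2 ≠ ∞ →
        ∀ D S : Set (Set (Rn n)), IsDyadicSystem D → S ⊆ D → IsSparse S →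
          ∀ Qt ∈ D, ∀ f2 : Rn n → ℝ, Measurable f2 → Function.support f2 ⊆ Qt →
            lpNorm
                (Qt.indicator fun x =>
                  ∑' Q : {R : Set (Rn n) // R ∈ S ∧ Qt ⊆ R},
                    Set.indicator (Q : Set (Rn n))
                      (fun _ =>
                        avg (Qt.indicator (dualW p1 w1)) Q *
                          avg (fun y => eAbs f2 y * dualW p2 w2 y) Q) x) p
                (vweight p p1 p2 w1 w2) ≤
              C * APconst p p1 p2 w1 w2 ^ (1 / p) *
                lpNorm (eAbs f2) p2 (dualW p2 w2) *
                mass (dualW p1 w1) Qt ^ (1 / p1) :=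
  statement15_general p p1 p2 hp1 hp2 hp
end
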